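/- Let F be a field of characteristic zero, q ∈ ℚ ∖ {0,1,−1}, A = [[1,0,0],[1,q,0],[1,0,q⁻¹]] ∈ SL(3,F), and Σ = {Aᵏ : k ∈ ℤ}. If g ∈ SL(3,F) satisfies gΣg⁻¹ ∩ Σ ≠ {1}, then gAg⁻¹ equals A or A⁻¹; in particular g normalizes Σ, i.e. gΣg⁻¹ = Σ. More precisely: if k ∈ ℤ ∖ {0} and gAᵏg⁻¹ = Aᵐ for some m ∈ ℤ, then m = k or m = −k, and gAg⁻¹ ∈ {A, A⁻¹}. -/

import Mathlib

open Matrix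

/-- The matrix `A = [[1,0,0],[1,q,0],[1,0,q⁻¹]]` as an element of `SL(3,F)`,
for a field `F` of characteristic zero and `q ∈ ℚ`, `q ≠ 0`. -/
def AmatSL (F : Type) [Field F] [CharZero F] (q : ℚ) (hq : q ≠ 0) :
    Matrix.SpecialLinearGroup (Fin 3) F :=
  ⟨!![1, 0, 0; 1, (q : F), 0; 1, 0, (q : F)⁻¹], by
    have hq' : (q : F) ≠ 0 := by exact_mod_cast hq
    simp [Matrix.det_fin_three]
    field_simp⟩

/-! `A` diagonalises as `P · diag(1, q, q⁻¹) · P⁻¹`, and since `q` is a rational number other than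
`0, ±1` its integer powers are pairwise distinct, so `Aᵏ` (for `k ≠ 0`) has the three distinct
eigenvalues `1, qᵏ, q⁻ᵏ`. Conjugating `g Aᵏ g⁻¹ = Aᵐ` by `P` gives `s Dᵏ = Dᵐ s` with `D` diagonal.
Comparing eigenvalues forces `m = ±k`; and a matrix intertwining two diagonal matrices with
distinct entries is monomial, with a permutation pattern that also intertwines `D` with `D^(±1)`. -/

namespace Matrix

variable {n R : Type*} [Fintype n] [DecidableEq n] [CommRing R] [NoZeroDivisors R]

theorem eq_zero_or_eq_of_mul_diagonal_eq {u : Matrix n n R} {d e : n → R}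
    (h : u * diagonal d = diagonal e * u) (i j : n) : u i j = 0 ∨ d j = e i := by
  have hij : u i j * (d j - e i) = 0 := by
    rw [mul_sub, ← mul_diagonal, h, diagonal_mul, mul_comm, sub_self]
  simpa [sub_eq_zero] using hij

theorem exists_eq_of_mul_diagonal_eq {u : Matrix n n R} (hu : u.det ≠ 0) {d e : n → R}
    (h : u * diagonal d = diagonal e * u) (j : n) : ∃ i, d j = e i := by
  by_contra! hne
  exact hu (det_eq_zero_of_column_eq_zero j fun i =>
    (eq_zero_or_eq_of_mul_diagonal_eq h i j).resolve_right (hne i))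

/-- Since `d` has distinct entries, `u i j ≠ 0` forces `j = σ i`. -/
theorem mul_diagonal_comp_eq_of_injective {u : Matrix n n R} {d : n → R}
    (hd : Function.Injective d) {σ : n → n} (h : u * diagonal d = diagonal (d ∘ σ) * u)
    (f : n → R) : u * diagonal f = diagonal (f ∘ σ) * u := by
  ext i j
  rw [mul_diagonal, diagonal_mul]
  rcases eq_zero_or_eq_of_mul_diagonal_eq h i j with h0 | hij
  · simp [h0]
  · rw [Function.comp_apply, ← hd hij, mul_comm]

end Matrix

theorem Rat.injective_cast_zpow {F : Type*} [Field F] [CharZero F] {q : ℚ}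
    (hq0 : q ≠ 0) (hq1 : q ≠ 1) (hqm1 : q ≠ -1) :
    Function.Injective fun n : ℤ => (q : F) ^ n := by
  intro a b hab
  have hq : q ^ a = q ^ b := Rat.cast_injective (α := F) (by simpa only [Rat.cast_zpow] using hab)
  have habs : |q| ≠ 1 := fun h => (abs_eq zero_le_one).1 h |>.elim hq1 hqm1
  exact zpow_right_injective₀ (abs_pos.2 hq0) habs (by simp only [← abs_zpow, hq])

/-- The exponents of `q` in the eigenvalues `1, q, q⁻¹` of `A`. -/
def eigenExp : Fin 3 → ℤ := ![0, 1, -1]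

theorem eigenExp_injective : Function.Injective eigenExp := by
  decide

theorem eigenExp_comp_swap : eigenExp ∘ Equiv.swap 1 2 = -eigenExp := by
  decide

def diagSL {F : Type*} [Field F] {x : F} (hx : x ≠ 0) (m : ℤ) : SpecialLinearGroup (Fin 3) F :=
  ⟨diagonal fun i => x ^ (m * eigenExp i), by
    simp [det_diagonal, Fin.prod_univ_three, eigenExp, mul_inv_cancel₀ (zpow_ne_zero m hx)]⟩

section DiagSL

variable {F : Type*} [Field F] {x : F} (hx : x ≠ 0)

theorem diagSL_add (a b : ℤ) : diagSL hx (a + b) = diagSL hx a * diagSL hx b :=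
  Subtype.ext <| by
    change diagonal _ = diagonal _ * diagonal _
    simp only [diagonal_mul_diagonal, add_mul, zpow_add₀ hx]

theorem diagSL_zero : diagSL hx 0 = 1 :=
  Subtype.ext <| by
    change diagonal _ = 1
    simp

theorem diagSL_one_zpow (m : ℤ) : diagSL hx 1 ^ m = diagSL hx m := by
  have hinv : (diagSL hx 1)⁻¹ = diagSL hx (-1) :=
    inv_eq_of_mul_eq_one_right (by rw [← diagSL_add, add_neg_cancel, diagSL_zero])
  induction m using Int.induction_on with
  | zero => rw [zpow_zero, diagSL_zero]
  | succ n ih => rw [_root_.zpow_add_one, ih, diagSL_add]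
  | pred n ih => rw [_root_.zpow_sub_one, ih, hinv, sub_eq_add_neg, diagSL_add]

theorem eq_or_eq_neg_of_mul_diagSL (hinj : Function.Injective fun n : ℤ => x ^ n)
    {s : SpecialLinearGroup (Fin 3) F} {k m : ℤ} (hk : k ≠ 0)
    (h : s * diagSL hx k = diagSL hx m * s) : m = k ∨ m = -k := by
  obtain ⟨i, hi⟩ := exists_eq_of_mul_diagonal_eq (by simp) (congrArg Subtype.val h) 1
  have hki : k * eigenExp 1 = m * eigenExp i := hinj hi
  fin_cases i <;> simp [eigenExp] at hki <;> omega

theorem mul_diagSL_one_of_mul_diagSL (hinj : Function.Injective fun n : ℤ => x ^ n)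
    {s : SpecialLinearGroup (Fin 3) F} {k ε : ℤ} (hk : k ≠ 0) (hε : ε = 1 ∨ ε = -1)
    (h : s * diagSL hx k = diagSL hx (ε * k) * s) :
    s * diagSL hx 1 = diagSL hx ε * s := by
  obtain ⟨σ, hσ⟩ : ∃ σ : Fin 3 → Fin 3, ∀ n i, n * eigenExp (σ i) = ε * n * eigenExp i := by
    rcases hε with rfl | rfl
    · exact ⟨id, fun n i => by simp⟩
    · refine ⟨Equiv.swap 1 2, fun n i => ?_⟩
      rw [← Function.comp_apply (f := eigenExp), eigenExp_comp_swap]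
      simp
  have hd : Function.Injective fun i => x ^ (k * eigenExp i) :=
    fun i j hij => eigenExp_injective (mul_left_cancel₀ hk (hinj hij))
  have hmat : (s : Matrix (Fin 3) (Fin 3) F) * diagonal (fun i => x ^ (k * eigenExp i)) =
      diagonal ((fun i => x ^ (k * eigenExp i)) ∘ σ) * s := by
    simp only [Function.comp_def, hσ]
    exact congrArg Subtype.val h
  have hmat₁ := mul_diagonal_comp_eq_of_injective hd hmat fun i => x ^ (1 * eigenExp i)
  simp only [Function.comp_def, hσ 1, mul_one] at hmat₁
  exact Subtype.ext hmat₁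

end DiagSL

theorem conj_conj_eq_conj_iff {G : Type*} [Group G] (g p a b : G) :
    g * (p * a * p⁻¹) * g⁻¹ = p * b * p⁻¹ ↔ p⁻¹ * g * p * a = b * (p⁻¹ * g * p) := by
  calc g * (p * a * p⁻¹) * g⁻¹ = p * b * p⁻¹
        ↔ p * (p⁻¹ * g * p * a * (p⁻¹ * g * p)⁻¹) * p⁻¹ = p * b * p⁻¹ := by group
    _ ↔ p⁻¹ * g * p * a * (p⁻¹ * g * p)⁻¹ = b := by rw [mul_left_inj, mul_right_inj]
    _ ↔ _ := mul_inv_eq_iff_eq_mul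

/-- Its columns are eigenvectors of `A` for the eigenvalues `1, q, q⁻¹`. -/
def eigenbasisSL {F : Type*} [Field F] (x : F) : SpecialLinearGroup (Fin 3) F :=
  ⟨!![1, 0, 0; (1 - x)⁻¹, 1, 0; x * (x - 1)⁻¹, 0, 1], by simp [det_fin_three]⟩

theorem AmatSL_eq_conj_diagSL {F : Type} [Field F] [CharZero F] {q : ℚ} (hq0 : q ≠ 0)
    (hq1 : q ≠ 1) (hx : (q : F) ≠ 0) :
    AmatSL F q hq0 = eigenbasisSL (q : F) * diagSL hx 1 * (eigenbasisSL (q : F))⁻¹ := by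
  have h1 : 1 - (q : F) ≠ 0 := sub_ne_zero.2 (by exact_mod_cast hq1.symm)
  have h2 : (q : F) - 1 ≠ 0 := sub_ne_zero.2 (by exact_mod_cast hq1)
  rw [eq_mul_inv_iff_mul_eq]
  refine Subtype.ext ?_
  change !![1, 0, 0; 1, (q : F), 0; 1, 0, (q : F)⁻¹] * !![1, 0, 0; (1 - (q : F))⁻¹, 1, 0;
    (q : F) * ((q : F) - 1)⁻¹, 0, 1] = !![1, 0, 0; (1 - (q : F))⁻¹, 1, 0;
    (q : F) * ((q : F) - 1)⁻¹, 0, 1] * diagonal fun i => (q : F) ^ (1 * eigenExp i)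
  ext i j
  fin_cases i <;> fin_cases j <;>
    simp [eigenExp, mul_apply, Fin.sum_univ_three]
  all_goals field_simp
  all_goals ring

/-- Let `F` be a field of characteristic zero, `q ∈ ℚ ∖ {0,1,-1}`,
`A` as above and `Σ = {Aᵏ : k ∈ ℤ}`.  If `g ∈ SL(3,F)` satisfies `g Aᵏ g⁻¹ = Aᵐ` with
`k ≠ 0`, then `m = k` or `m = -k`, `g A g⁻¹ ∈ {A, A⁻¹}`, and `g` normalizes `Σ`. -/
theorem conj_pow_Amat (F : Type) [Field F] [CharZero F]
    (q : ℚ) (hq0 : q ≠ 0) (hq1 : q ≠ 1) (hqm1 : q ≠ -1)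
    (g : Matrix.SpecialLinearGroup (Fin 3) F) (k m : ℤ) (hk : k ≠ 0)
    (h : g * (AmatSL F q hq0) ^ k * g⁻¹ = (AmatSL F q hq0) ^ m) :
    (m = k ∨ m = -k) ∧
    (g * AmatSL F q hq0 * g⁻¹ = AmatSL F q hq0 ∨
      g * AmatSL F q hq0 * g⁻¹ = (AmatSL F q hq0)⁻¹) ∧
    Subgroup.map (MulAut.conj g).toMonoidHom (Subgroup.zpowers (AmatSL F q hq0)) =
      Subgroup.zpowers (AmatSL F q hq0) := by
  have hx : (q : F) ≠ 0 := by exact_mod_cast hq0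
  have hinj := Rat.injective_cast_zpow (F := F) hq0 hq1 hqm1
  have hA := AmatSL_eq_conj_diagSL hq0 hq1 hx
  rw [hA, conj_zpow, conj_zpow, conj_conj_eq_conj_iff, diagSL_one_zpow, diagSL_one_zpow] at h
  have hmk : m = k ∨ m = -k := eq_or_eq_neg_of_mul_diagSL hx hinj hk h
  obtain ⟨ε, hε, rfl⟩ : ∃ ε : ℤ, (ε = 1 ∨ ε = -1) ∧ m = ε * k := hmk.elim
    (fun hm => ⟨1, .inl rfl, by rw [hm, one_mul]⟩)
    (fun hm => ⟨-1, .inr rfl, by rw [hm, neg_one_mul]⟩)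
  have hconj : g * AmatSL F q hq0 * g⁻¹ = AmatSL F q hq0 ^ ε := by
    rw [hA, conj_zpow, diagSL_one_zpow, conj_conj_eq_conj_iff]
    exact mul_diagSL_one_of_mul_diagSL hx hinj hk hε h
  refine ⟨hmk, by rcases hε with rfl | rfl <;> simp [hconj], ?_⟩
  rw [MonoidHom.map_zpowers, MulEquiv.coe_toMonoidHom, MulAut.conj_apply, hconj]
  rcases hε with rfl | rfl <;> simp
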